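/- Let ρ_X, ρ_Y ∈ [0,1] with ρ_X + ρ_Y > 0. Suppose that ∑_n P(π_X(n) < ρ_X) < ∞ whenever ρ_X > 0, and ∑_n P(π_Y(n) < ρ_Y) < ∞ whenever ρ_Y > 0. Then for every ζ > 0 we have ∑_n P(Λ(n) < n·(ρ_X·I + ρ_Y·J − ζ)) < ∞. -/

import Mathlib

/-!
Chernoff bound along an adaptively sampled log-likelihood process. Since the slope of
`t ↦ ∫ exp (-t g)` at `0⁺` is `-∫ g`, for small `t > 0` the tilted factors
`exp (t (I - ε - g₁ X))` and `exp (t (J - ε + g₂ Y))` have mean at most one. As `R_n`, `S_n` are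
predictable and `(X_n, Y_n)` is independent of the past, the product
`exp (t ((I - ε) ∑ R + (J - ε) ∑ S - Λ(n)))` of the factors actually sampled then has mean at most
one as well. On the event `Λ(n) < n (ρ_X I + ρ_Y J - ζ)` this product is at least `exp (t n ζ / 2)`
unless a sampling frequency falls below `ρ_X` or `ρ_Y`, so Markov's inequality bounds the
probability of the event by a geometric term plus two summable ones.
-/

open MeasureTheory ProbabilityTheory Real Filter Topology
open scoped ENNReal

lemma exp_neg_mul_le {t : ℝ} (ht₀ : 0 ≤ t) (ht₁ : t ≤ 1) (a : ℝ) :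
    exp (-(t * a)) ≤ 1 - t + t * exp (-a) := by
  have := convexOn_exp.2 (Set.mem_univ 0) (Set.mem_univ (-a)) (sub_nonneg.2 ht₁) ht₀
    (sub_add_cancel 1 t)
  simpa [smul_eq_mul] using this

lemma abs_one_sub_exp_neg_mul_div_le {t : ℝ} (ht₀ : 0 < t) (ht₁ : t ≤ 1) (a : ℝ) :
    |(1 - exp (-(t * a))) / t| ≤ |a| + 1 + exp (-a) := by
  have hupper : (1 - exp (-(t * a))) / t ≤ a := by
    rw [div_le_iff₀ ht₀]
    linarith [add_one_le_exp (-(t * a))]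
  have hlower : 1 - exp (-a) ≤ (1 - exp (-(t * a))) / t := by
    rw [le_div_iff₀ ht₀]
    linarith [exp_neg_mul_le ht₀.le ht₁ a]
  refine (abs_le_max_abs_abs hlower hupper).trans (max_le ?_ (by linarith [exp_pos (-a)]))
  exact (abs_sub _ _).trans (by simp [abs_of_pos (exp_pos _)])

section
variable {α : Type*} [MeasurableSpace α] {μ : Measure α} {g : α → ℝ}

lemma integrable_exp_neg_mul [IsFiniteMeasure μ] (hg : AEStronglyMeasurable g μ)
    (hexp : Integrable (fun x ↦ exp (-g x)) μ) {t : ℝ} (ht₀ : 0 ≤ t) (ht₁ : t ≤ 1) :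
    Integrable (fun x ↦ exp (-(t * g x))) μ := by
  refine ((integrable_const 1).add hexp).mono' (by fun_prop) (ae_of_all _ fun x ↦ ?_)
  rw [norm_of_nonneg (exp_pos _).le, Pi.add_apply]
  nlinarith [exp_neg_mul_le ht₀ ht₁ (g x), exp_pos (-g x)]

lemma tendsto_integral_one_sub_exp_neg_mul_div [IsFiniteMeasure μ] (hg : Integrable g μ)
    (hexp : Integrable (fun x ↦ exp (-g x)) μ) :
    Tendsto (fun t ↦ ∫ x, (1 - exp (-(t * g x))) / t ∂μ) (𝓝[>] 0) (𝓝 (∫ x, g x ∂μ)) := by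
  refine tendsto_integral_filter_of_dominated_convergence (fun x ↦ |g x| + 1 + exp (-g x))
    (Eventually.of_forall fun t ↦ by have := hg.1; fun_prop) ?_
    ((hg.abs.add (integrable_const 1)).add hexp) (ae_of_all _ fun x ↦ ?_)
  · filter_upwards [Ioc_mem_nhdsGT zero_lt_one] with t ht
    exact ae_of_all _ fun x ↦ abs_one_sub_exp_neg_mul_div_le ht.1 ht.2 (g x)
  · have hd : HasDerivAt (fun t ↦ 1 - exp (-(t * g x))) (g x) 0 := by
      simpa using ((hasDerivAt_mul_const (x := 0) (g x)).neg.exp.const_sub 1)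
    refine ((hasDerivAt_iff_tendsto_slope.1 hd).mono_left
      (nhdsWithin_mono _ fun t ht ↦ ne_of_gt ht)).congr' ?_
    filter_upwards [self_mem_nhdsWithin] with t ht
    simp [slope_def_field]

lemma eventually_lintegral_exp_mul_sub_le_one [IsProbabilityMeasure μ] (hg : Integrable g μ)
    (hexp : Integrable (fun x ↦ exp (-g x)) μ) {ε : ℝ} (hε : 0 < ε) :
    ∀ᶠ t in 𝓝[>] 0, ∫⁻ x, ENNReal.ofReal (exp (t * (∫ y, g y ∂μ - ε - g x))) ∂μ ≤ 1 := by
  set K := ∫ y, g y ∂μ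
  filter_upwards [Ioc_mem_nhdsGT zero_lt_one,
    (tendsto_integral_one_sub_exp_neg_mul_div hg hexp).eventually (lt_mem_nhds (sub_lt_self K hε))]
    with t ht hK
  have hint := integrable_exp_neg_mul hg.1 hexp ht.1.le ht.2
  rw [integral_div, integral_sub (integrable_const 1) hint, integral_const, probReal_univ,
    smul_eq_mul, mul_one, lt_div_iff₀ ht.1] at hK
  have hmgf : exp (t * (K - ε)) * ∫ x, exp (-(t * g x)) ∂μ ≤ 1 := by
    calc exp (t * (K - ε)) * ∫ x, exp (-(t * g x)) ∂μ
        ≤ exp (t * (K - ε)) * exp (-(t * (K - ε))) := by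
          gcongr; linarith [add_one_le_exp (-(t * (K - ε)))]
      _ = 1 := by rw [← exp_add]; simp
  have hsplit : ∀ x, exp (t * (K - ε - g x)) = exp (t * (K - ε)) * exp (-(t * g x)) := by
    intro x; rw [← exp_add]; ring_nf
  simp_rw [hsplit]
  rw [← ofReal_integral_eq_lintegral_ofReal (hint.const_mul _)
    (ae_of_all _ fun x ↦ by positivity), integral_const_mul]
  exact ENNReal.ofReal_le_one.2 hmgf
end

lemma integrable_exp_neg_llr {α : Type*} [MeasurableSpace α] {μ ν : Measure α} [SigmaFinite μ]
    [IsFiniteMeasure ν] (hμν : μ ≪ ν) : Integrable (fun x ↦ exp (-llr μ ν x)) μ :=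
  Measure.integrable_toReal_rnDeriv.congr (exp_neg_llr hμν).symm

lemma eventually_lintegral_exp_mul_add_llr_le_one {α : Type*} [MeasurableSpace α]
    {μ ν : Measure α} [IsProbabilityMeasure μ] [IsFiniteMeasure ν] (hμν : μ ≪ ν)
    (hint : Integrable (llr μ ν) μ) {ε : ℝ} (hε : 0 < ε) :
    ∀ᶠ t in 𝓝[>] 0,
      ∫⁻ x, ENNReal.ofReal (exp (t * (∫ y, llr μ ν y ∂μ - ε + llr ν μ x))) ∂μ ≤ 1 := by
  filter_upwards [eventually_lintegral_exp_mul_sub_le_one hint (integrable_exp_neg_llr hμν) hε]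
    with t ht
  refine (lintegral_congr_ae ?_).trans_le ht
  filter_upwards [neg_llr hμν] with x hx
  rw [← hx, Pi.neg_apply, ← sub_eq_add_neg]

section Independence
variable {Ω α E : Type*} {m mΩ : MeasurableSpace Ω} [MeasurableSpace α] [mE : MeasurableSpace E]
  {P : Measure Ω}

lemma lintegral_comp_eq_lintegral_lintegral_map_of_indep [IsFiniteMeasure P]
    (hm : m ≤ mΩ) {V : Ω → α} {Z : Ω → E} (hV : Measurable[m] V)
    (hZ : Measurable Z) (hind : Indep m (MeasurableSpace.comap Z mE) P) {f : α → E → ℝ≥0∞}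
    (hf : Measurable (Function.uncurry f)) :
    ∫⁻ ω, f (V ω) (Z ω) ∂P = ∫⁻ ω, ∫⁻ z, f (V ω) z ∂(P.map Z) ∂P := by
  have hV' : Measurable V := hV.mono hm le_rfl
  have hVZ : IndepFun V Z P :=
    (IndepFun_iff_Indep V Z P).2 (indep_of_indep_of_le_left hind hV.comap_le)
  calc ∫⁻ ω, f (V ω) (Z ω) ∂P
      = ∫⁻ p, Function.uncurry f p ∂(P.map fun ω ↦ (V ω, Z ω)) :=
        (lintegral_map hf (hV'.prodMk hZ)).symm
    _ = ∫⁻ p, Function.uncurry f p ∂((P.map V).prod (P.map Z)) := by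
        rw [(indepFun_iff_map_prod_eq_prod_map_map hV'.aemeasurable hZ.aemeasurable).1 hVZ]
    _ = ∫⁻ v, ∫⁻ z, f v z ∂(P.map Z) ∂(P.map V) := lintegral_prod _ hf.aemeasurable
    _ = ∫⁻ ω, ∫⁻ z, f (V ω) z ∂(P.map Z) ∂P := lintegral_map hf.lintegral_prod_right' hV'

lemma lintegral_prod_Icc_le_one [IsProbabilityMeasure P] {ν : Measure E}
    (F : Filtration ℕ mΩ) {Z : ℕ → Ω → E} {W : ℕ → Ω → α} {φ : α → E → ℝ≥0∞}
    (hZ : ∀ n, 1 ≤ n → Measurable[F n] (Z n)) (hlaw : ∀ n, 1 ≤ n → P.map (Z n) = ν)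
    (hindep : ∀ n, 1 ≤ n → Indep (MeasurableSpace.comap (Z n) mE) (F (n - 1)) P)
    (hW : ∀ n, 1 ≤ n → Measurable[F (n - 1)] (W n)) (hφ : Measurable (Function.uncurry φ))
    (hφν : ∀ n ω, ∫⁻ z, φ (W n ω) z ∂ν ≤ 1) (n : ℕ) :
    ∫⁻ ω, ∏ m ∈ Finset.Icc 1 n, φ (W m ω) (Z m ω) ∂P ≤ 1 := by
  have hmeas : ∀ n, Measurable[F n] fun ω ↦ ∏ m ∈ Finset.Icc 1 n, φ (W m ω) (Z m ω) := by
    refine fun n ↦ Finset.measurable_prod _ fun m hm ↦ ?_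
    obtain ⟨h1, h2⟩ := Finset.mem_Icc.1 hm
    exact hφ.comp (((hW m h1).mono (F.mono (by omega)) le_rfl).prodMk
      ((hZ m h1).mono (F.mono h2) le_rfl))
  induction n with
  | zero => simp
  | succ n ih =>
    have hn : 1 ≤ n + 1 := by omega
    have hmul : Measurable (Function.uncurry fun (p : ℝ≥0∞ × α) z ↦ p.1 * φ p.2 z) :=
      (measurable_fst.comp measurable_fst).mul
        (hφ.comp ((measurable_snd.comp measurable_fst).prodMk measurable_snd))
    calc ∫⁻ ω, ∏ m ∈ Finset.Icc 1 (n + 1), φ (W m ω) (Z m ω) ∂P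
        = ∫⁻ ω, ∫⁻ z, (∏ m ∈ Finset.Icc 1 n, φ (W m ω) (Z m ω)) * φ (W (n + 1) ω) z
            ∂(P.map (Z (n + 1))) ∂P := by
          simp_rw [Finset.prod_Icc_succ_top hn]
          exact lintegral_comp_eq_lintegral_lintegral_map_of_indep (F.le n)
            ((hmeas n).prodMk (hW (n + 1) hn)) ((hZ (n + 1) hn).mono (F.le (n + 1)) le_rfl)
            (hindep (n + 1) hn).symm hmul
      _ ≤ ∫⁻ ω, ∏ m ∈ Finset.Icc 1 n, φ (W m ω) (Z m ω) ∂P := by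
          refine lintegral_mono fun ω ↦ ?_
          have hφw : Measurable (φ (W (n + 1) ω)) := hφ.comp measurable_prodMk_left
          rw [hlaw (n + 1) hn, lintegral_const_mul _ hφw]
          exact mul_le_of_le_one_right' (hφν _ _)
      _ ≤ 1 := ih

end Independence

lemma lintegral_exp_mul_add_mul_le_one {α β : Type*} [MeasurableSpace α] [MeasurableSpace β]
    {μ : Measure α} {ν : Measure β} [IsProbabilityMeasure μ] [IsProbabilityMeasure ν]
    {a : α → ℝ} {b : β → ℝ} (ha : Measurable a) (hb : Measurable b)
    (haμ : ∫⁻ x, ENNReal.ofReal (exp (a x)) ∂μ ≤ 1)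
    (hbν : ∫⁻ y, ENNReal.ofReal (exp (b y)) ∂ν ≤ 1) {r s : ℝ} (hr : r = 0 ∨ r = 1)
    (hs : s = 0 ∨ s = 1) :
    ∫⁻ p, ENNReal.ofReal (exp (r * a p.1 + s * b p.2)) ∂(μ.prod ν) ≤ 1 := by
  simp_rw [exp_add, ENNReal.ofReal_mul (exp_nonneg _)]
  rw [lintegral_prod_mul (f := fun x ↦ ENNReal.ofReal (exp (r * a x)))
    (g := fun y ↦ ENNReal.ofReal (exp (s * b y))) (by fun_prop) (by fun_prop)]
  refine mul_le_one' ?_ ?_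
  · rcases hr with rfl | rfl <;> simp [haμ]
  · rcases hs with rfl | rfl <;> simp [hbν]

lemma measure_lt_le_of_lintegral_exp_le_one {Ω : Type*} [MeasurableSpace Ω] {P : Measure Ω}
    {L A B : Ω → ℝ} (hL : Measurable L) (hA : Measurable A) (hB : Measurable B)
    {t α β a b x : ℝ} (ht : 0 ≤ t) (hα : 0 ≤ α) (hβ : 0 ≤ β)
    (hM : ∫⁻ ω, ENNReal.ofReal (exp (t * (α * A ω + β * B ω - L ω))) ∂P ≤ 1) :
    P {ω | L ω < x} ≤ ENNReal.ofReal (exp (-(t * (α * a + β * b - x))))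
      + (P {ω | A ω < a} + P {ω | B ω < b}) := by
  set c := ENNReal.ofReal (exp (t * (α * a + β * b - x)))
  have hsub : {ω | L ω < x} ⊆
      {ω | c ≤ ENNReal.ofReal (exp (t * (α * A ω + β * B ω - L ω)))} ∪
        ({ω | A ω < a} ∪ {ω | B ω < b}) := by
    intro ω (hLx : L ω < x)
    rcases lt_or_ge (A ω) a with hAa | hAa
    · exact Or.inr (Or.inl hAa)
    rcases lt_or_ge (B ω) b with hBb | hBb
    · exact Or.inr (Or.inr hBb)
    refine Or.inl (ENNReal.ofReal_le_ofReal (exp_le_exp.2 ?_))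
    nlinarith [mul_le_mul_of_nonneg_left hAa hα, mul_le_mul_of_nonneg_left hBb hβ]
  have hc : c ≠ 0 := (ENNReal.ofReal_pos.2 (exp_pos _)).ne'
  have hmarkov := meas_ge_le_lintegral_div (μ := P)
    (f := fun ω ↦ ENNReal.ofReal (exp (t * (α * A ω + β * B ω - L ω)))) (by fun_prop) hc
    ENNReal.ofReal_ne_top
  calc P {ω | L ω < x} ≤ _ := (measure_mono hsub).trans (measure_union_le _ _)
    _ ≤ 1 / c + P ({ω | A ω < a} ∪ {ω | B ω < b}) :=
        add_le_add (hmarkov.trans (ENNReal.div_le_div_right hM c)) le_rfl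
    _ ≤ _ := by
        gcongr
        · rw [one_div, ← ENNReal.ofReal_inv_of_pos (exp_pos _), ← exp_neg]
        · exact measure_union_le _ _

lemma tsum_measure_sum_lt_mul_lt_top {Ω : Type*} [MeasurableSpace Ω] {P : Measure Ω}
    {R : ℕ → Ω → ℝ} (hR : ∀ n ω, 0 ≤ R n ω) {ρ : ℝ} (hρ : 0 ≤ ρ)
    (hsum : 0 < ρ → ∑' n : ℕ, P {ω | (∑ m ∈ Finset.Icc 1 n, R m ω) / n < ρ} < ⊤) :
    ∑' n : ℕ, P {ω | ∑ m ∈ Finset.Icc 1 n, R m ω < n * ρ} < ⊤ := by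
  have hR' : ∀ n ω, 0 ≤ ∑ m ∈ Finset.Icc 1 n, R m ω := fun n ω ↦
    Finset.sum_nonneg fun m _ ↦ hR m ω
  rcases hρ.eq_or_lt with rfl | hρ
  · simp [fun (n : ℕ) (ω : Ω) ↦ (hR' n ω).not_gt]
  refine (ENNReal.tsum_le_tsum fun n ↦ measure_mono fun ω (h : ∑ m ∈ Finset.Icc 1 n, R m ω < n * ρ) ↦ ?_).trans_lt
    (hsum hρ)
  have hn : (0 : ℝ) < n := by nlinarith [hR' n ω]
  exact (div_lt_iff₀ hn).2 (by linarith)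

lemma measure_sum_mul_sub_sum_mul_lt_le {Ω S₁ S₂ : Type*} {mΩ : MeasurableSpace Ω}
    [mS₁ : MeasurableSpace S₁] [mS₂ : MeasurableSpace S₂] {P : Measure Ω} [IsProbabilityMeasure P]
    {μ : Measure S₁} {ν : Measure S₂} [IsProbabilityMeasure μ] [IsProbabilityMeasure ν]
    (F : Filtration ℕ mΩ) {X : ℕ → Ω → S₁} {Y : ℕ → Ω → S₂}
    (hXYmeas : ∀ n, 1 ≤ n → Measurable[F n] (fun ω ↦ (X n ω, Y n ω)))
    (hXYlaw : ∀ n, 1 ≤ n → P.map (fun ω ↦ (X n ω, Y n ω)) = μ.prod ν)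
    (hXYindep : ∀ n, 1 ≤ n →
      Indep (MeasurableSpace.comap (fun ω ↦ (X n ω, Y n ω)) (mS₁.prod mS₂)) (F (n - 1)) P)
    {R S : ℕ → Ω → ℝ} (hR01 : ∀ n ω, R n ω = 0 ∨ R n ω = 1) (hS01 : ∀ n ω, S n ω = 0 ∨ S n ω = 1)
    (hRmeas : ∀ n, 1 ≤ n → Measurable[F (n - 1)] (R n))
    (hSmeas : ∀ n, 1 ≤ n → Measurable[F (n - 1)] (S n))
    {g₁ : S₁ → ℝ} {g₂ : S₂ → ℝ} (hg₁ : Measurable g₁) (hg₂ : Measurable g₂) {t c₁ c₂ : ℝ}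
    (ht : 0 ≤ t) (hc₁ : 0 ≤ c₁) (hc₂ : 0 ≤ c₂)
    (hμ : ∫⁻ x, ENNReal.ofReal (exp (t * (c₁ - g₁ x))) ∂μ ≤ 1)
    (hν : ∫⁻ y, ENNReal.ofReal (exp (t * (c₂ + g₂ y))) ∂ν ≤ 1) (n : ℕ) (a b x : ℝ) :
    P {ω | (∑ m ∈ Finset.Icc 1 n, g₁ (X m ω) * R m ω)
        - (∑ m ∈ Finset.Icc 1 n, g₂ (Y m ω) * S m ω) < x} ≤
      ENNReal.ofReal (exp (-(t * (c₁ * a + c₂ * b - x))))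
        + (P {ω | ∑ m ∈ Finset.Icc 1 n, R m ω < a} + P {ω | ∑ m ∈ Finset.Icc 1 n, S m ω < b}) := by
  have hsum : ∀ f : ℕ → Ω → ℝ, (∀ m, 1 ≤ m → Measurable (f m)) →
      Measurable fun ω ↦ ∑ m ∈ Finset.Icc 1 n, f m ω := fun f hf ↦
    Finset.measurable_sum _ fun m hm ↦ hf m (Finset.mem_Icc.1 hm).1
  have hXY : ∀ m, 1 ≤ m → Measurable fun ω ↦ (X m ω, Y m ω) := fun m hm ↦
    (hXYmeas m hm).mono (F.le m) le_rfl
  have hR : ∀ m, 1 ≤ m → Measurable (R m) := fun m hm ↦ (hRmeas m hm).mono (F.le _) le_rfl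
  have hS : ∀ m, 1 ≤ m → Measurable (S m) := fun m hm ↦ (hSmeas m hm).mono (F.le _) le_rfl
  have hL : Measurable fun ω ↦ (∑ m ∈ Finset.Icc 1 n, g₁ (X m ω) * R m ω)
      - ∑ m ∈ Finset.Icc 1 n, g₂ (Y m ω) * S m ω :=
    (hsum _ fun m hm ↦ (hg₁.comp (hXY m hm).fst).mul (hR m hm)).sub
      (hsum _ fun m hm ↦ (hg₂.comp (hXY m hm).snd).mul (hS m hm))
  refine measure_lt_le_of_lintegral_exp_le_one hL (hsum R hR) (hsum S hS) ht hc₁ hc₂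
    (le_of_eq_of_le (lintegral_congr fun ω ↦ ?_) (lintegral_prod_Icc_le_one F hXYmeas hXYlaw
      hXYindep (fun n hn ↦ (hRmeas n hn).prodMk (hSmeas n hn))
      (φ := fun w z ↦ ENNReal.ofReal (exp (w.1 * (t * (c₁ - g₁ z.1)) + w.2 * (t * (c₂ + g₂ z.2)))))
      (by fun_prop) (fun n ω ↦ lintegral_exp_mul_add_mul_le_one (by fun_prop) (by fun_prop) hμ hν
        (hR01 n ω) (hS01 n ω)) n))
  rw [← ENNReal.ofReal_prod_of_nonneg fun m _ ↦ (exp_pos _).le, ← exp_sum]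
  congr 2
  simp only [Finset.mul_sum, ← Finset.sum_sub_distrib, ← Finset.sum_add_distrib]
  exact Finset.sum_congr rfl fun m _ ↦ by ring

theorem stmt_6_general {Ω : Type*} [mΩ : MeasurableSpace Ω] (P : Measure Ω) [IsProbabilityMeasure P]
    {S₁ S₂ : Type*} [mS₁ : MeasurableSpace S₁] [mS₂ : MeasurableSpace S₂]
    (μ0₁ μ1₁ : Measure S₁) (μ0₂ μ1₂ : Measure S₂)
    [IsProbabilityMeasure μ0₁] [IsProbabilityMeasure μ1₁]
    [IsProbabilityMeasure μ0₂] [IsProbabilityMeasure μ1₂]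
    -- I := KL(μ1⁽¹⁾‖μ0⁽¹⁾) and J := KL(μ0⁽²⁾‖μ1⁽²⁾) are finite and positive
    (hac1 : μ1₁ ≪ μ0₁) (hac2 : μ0₂ ≪ μ1₂)
    (hint1 : Integrable (llr μ1₁ μ0₁) μ1₁) (hint2 : Integrable (llr μ0₂ μ1₂) μ0₂)
    (I : ℝ) (hI : I = ∫ x, llr μ1₁ μ0₁ x ∂μ1₁) (hIpos : 0 < I)
    (J : ℝ) (hJ : J = ∫ x, llr μ0₂ μ1₂ x ∂μ0₂) (hJpos : 0 < J)
    -- the filtration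
    (F : Filtration ℕ mΩ)
    -- the observations: (X_n, Y_n) i.i.d. with law μ1⁽¹⁾ ⊗ μ0⁽²⁾ (in particular the two
    -- sequences are independent of each other), adapted and independent of the past
    (X : ℕ → Ω → S₁) (Y : ℕ → Ω → S₂)
    (hXYmeas : ∀ n, 1 ≤ n → Measurable[F n] (fun ω => (X n ω, Y n ω)))
    (hXYlaw : ∀ n, 1 ≤ n → Measure.map (fun ω => (X n ω, Y n ω)) P = μ1₁.prod μ0₂)
    (hXYindep : ∀ n, 1 ≤ n →
      Indep (MeasurableSpace.comap (fun ω => (X n ω, Y n ω)) (mS₁.prod mS₂)) (F (n - 1)) P)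
    -- the sampling indicators, previsible and {0,1}-valued
    (R S : ℕ → Ω → ℝ)
    (hR01 : ∀ n ω, R n ω = 0 ∨ R n ω = 1) (hS01 : ∀ n ω, S n ω = 0 ∨ S n ω = 1)
    (hRmeas : ∀ n, 1 ≤ n → Measurable[F (n - 1)] (R n))
    (hSmeas : ∀ n, 1 ≤ n → Measurable[F (n - 1)] (S n))
    (ρX ρY : ℝ) (hρX : ρX ∈ Set.Icc (0:ℝ) 1) (hρY : ρY ∈ Set.Icc (0:ℝ) 1)
    (hsumX : 0 < ρX → (∑' n : ℕ, P {ω | (∑ m ∈ Finset.Icc 1 n, R m ω) / n < ρX}) < ⊤)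
    (hsumY : 0 < ρY → (∑' n : ℕ, P {ω | (∑ m ∈ Finset.Icc 1 n, S m ω) / n < ρY}) < ⊤)
    (ζ : ℝ) (hζ : 0 < ζ) :
    (∑' n : ℕ,
        P {ω | ((∑ m ∈ Finset.Icc 1 n, llr μ1₁ μ0₁ (X m ω) * R m ω)
                - (∑ m ∈ Finset.Icc 1 n, llr μ1₂ μ0₂ (Y m ω) * S m ω))
               < n * (ρX * I + ρY * J - ζ)}) < ⊤ := by
  -- `ε ≤ ζ / 4` keeps half of the margin `ζ`, and `ε ≤ min I J` keeps the weights nonnegative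
  set ε := min (ζ / 4) (min I J)
  have hε : 0 < ε := lt_min (by positivity) (lt_min hIpos hJpos)
  have hεI : 0 ≤ I - ε := sub_nonneg.2 ((min_le_right _ _).trans (min_le_left _ _))
  have hεJ : 0 ≤ J - ε := sub_nonneg.2 ((min_le_right _ _).trans (min_le_right _ _))
  obtain ⟨t, ht, hX, hY⟩ := (eventually_mem_nhdsWithin.and
    ((eventually_lintegral_exp_mul_sub_le_one hint1 (integrable_exp_neg_llr hac1) hε).and
      (eventually_lintegral_exp_mul_add_llr_le_one hac2 hint2 hε))).exists
  rw [← hI] at hX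
  rw [← hJ] at hY
  have hερ : ε * (ρX + ρY) ≤ ζ / 2 := by
    nlinarith [min_le_left (ζ / 4) (min I J), hρX.2, hρY.2, hρX.1, hρY.1]
  have hgeom : ∀ n : ℕ, ENNReal.ofReal (exp (-(t * ((I - ε) * (n * ρX) + (J - ε) * (n * ρY)
      - n * (ρX * I + ρY * J - ζ))))) ≤ ENNReal.ofReal (exp (-(t * ζ / 2))) ^ n := fun n ↦ by
    rw [← ENNReal.ofReal_pow (exp_nonneg _), ← exp_nat_mul]
    gcongr
    nlinarith [mul_le_mul_of_nonneg_left hερ (mul_nonneg ht.out.le n.cast_nonneg)]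
  have hR0 : ∀ n ω, 0 ≤ R n ω := fun n ω ↦ by rcases hR01 n ω with h | h <;> simp [h]
  have hS0 : ∀ n ω, 0 ≤ S n ω := fun n ω ↦ by rcases hS01 n ω with h | h <;> simp [h]
  refine (ENNReal.tsum_le_tsum fun n ↦ (measure_sum_mul_sub_sum_mul_lt_le F hXYmeas hXYlaw
    hXYindep hR01 hS01 hRmeas hSmeas (measurable_llr _ _) (measurable_llr _ _) ht.out.le hεI hεJ
    hX hY n (n * ρX) (n * ρY) _).trans (add_le_add (hgeom n) le_rfl)).trans_lt ?_
  rw [ENNReal.tsum_add, ENNReal.tsum_add, ENNReal.tsum_geometric]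
  refine ENNReal.add_lt_top.2 ⟨ENNReal.inv_lt_top.2 (tsub_pos_of_lt ?_), ENNReal.add_lt_top.2
    ⟨tsum_measure_sum_lt_mul_lt_top hR0 hρX.1 hsumX,
      tsum_measure_sum_lt_mul_lt_top hS0 hρY.1 hsumY⟩⟩
  exact ENNReal.ofReal_lt_one.2 (exp_lt_one_iff.2 (by nlinarith [mul_pos ht.out hζ]))

theorem stmt_6 {Ω : Type*} [mΩ : MeasurableSpace Ω] (P : Measure Ω) [IsProbabilityMeasure P]
    {S₁ S₂ : Type*} [mS₁ : MeasurableSpace S₁] [mS₂ : MeasurableSpace S₂]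
    (μ0₁ μ1₁ : Measure S₁) (μ0₂ μ1₂ : Measure S₂)
    [IsProbabilityMeasure μ0₁] [IsProbabilityMeasure μ1₁]
    [IsProbabilityMeasure μ0₂] [IsProbabilityMeasure μ1₂]
    -- I := KL(μ1⁽¹⁾‖μ0⁽¹⁾) and J := KL(μ0⁽²⁾‖μ1⁽²⁾) are finite and positive
    (hac1 : μ1₁ ≪ μ0₁) (hac2 : μ0₂ ≪ μ1₂)
    (hint1 : Integrable (llr μ1₁ μ0₁) μ1₁) (hint2 : Integrable (llr μ0₂ μ1₂) μ0₂)
    (I : ℝ) (hI : I = ∫ x, llr μ1₁ μ0₁ x ∂μ1₁) (hIpos : 0 < I)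
    (J : ℝ) (hJ : J = ∫ x, llr μ0₂ μ1₂ x ∂μ0₂) (hJpos : 0 < J)
    -- the filtration
    (F : Filtration ℕ mΩ)
    -- the observations: (X_n, Y_n) i.i.d. with law μ1⁽¹⁾ ⊗ μ0⁽²⁾ (in particular the two
    -- sequences are independent of each other), adapted and independent of the past
    (X : ℕ → Ω → S₁) (Y : ℕ → Ω → S₂)
    (hXYmeas : ∀ n, 1 ≤ n → Measurable[F n] (fun ω => (X n ω, Y n ω)))
    (hXYlaw : ∀ n, 1 ≤ n → Measure.map (fun ω => (X n ω, Y n ω)) P = μ1₁.prod μ0₂)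
    (hXYiid : iIndepFun (m := fun _ => mS₁.prod mS₂) (fun n ω => (X n ω, Y n ω)) P)
    (hXYindep : ∀ n, 1 ≤ n →
      Indep (MeasurableSpace.comap (fun ω => (X n ω, Y n ω)) (mS₁.prod mS₂)) (F (n - 1)) P)
    -- the sampling indicators, previsible and {0,1}-valued
    (R S : ℕ → Ω → ℝ)
    (hR01 : ∀ n ω, R n ω = 0 ∨ R n ω = 1) (hS01 : ∀ n ω, S n ω = 0 ∨ S n ω = 1)
    (hRmeas : ∀ n, 1 ≤ n → Measurable[F (n - 1)] (R n))
    (hSmeas : ∀ n, 1 ≤ n → Measurable[F (n - 1)] (S n))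
    (ρX ρY : ℝ) (hρX : ρX ∈ Set.Icc (0:ℝ) 1) (hρY : ρY ∈ Set.Icc (0:ℝ) 1)
    (hρpos : 0 < ρX + ρY)
    (hsumX : 0 < ρX → (∑' n : ℕ, P {ω | (∑ m ∈ Finset.Icc 1 n, R m ω) / n < ρX}) < ⊤)
    (hsumY : 0 < ρY → (∑' n : ℕ, P {ω | (∑ m ∈ Finset.Icc 1 n, S m ω) / n < ρY}) < ⊤)
    (ζ : ℝ) (hζ : 0 < ζ) :
    (∑' n : ℕ,
        P {ω | ((∑ m ∈ Finset.Icc 1 n, llr μ1₁ μ0₁ (X m ω) * R m ω)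
                - (∑ m ∈ Finset.Icc 1 n, llr μ1₂ μ0₂ (Y m ω) * S m ω))
               < n * (ρX * I + ρY * J - ζ)}) < ⊤ :=
  stmt_6_general (mΩ := mΩ) P (mS₁ := mS₁) (mS₂ := mS₂) μ0₁ μ1₁ μ0₂ μ1₂ hac1 hac2 hint1 hint2 I hI
    hIpos J hJ hJpos F X Y hXYmeas hXYlaw hXYindep R S hR01 hS01 hRmeas hSmeas ρX ρY hρX hρY hsumX
    hsumY ζ hζ
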